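/- arXiv:1203.5650 — 3 statements merged into one kernel-verified Lean document; each statement's English description precedes it below -/
import Mathlib

section
/- If the torsion subgroup of H_d(C) has finite exponent e (with e = 1 if there is no torsion), then the torsion subgroup of H_d(C/G) has finite exponent dividing |G| · e. -/
set_option synthInstance.maxHeartbeats 1000000
set_option maxHeartbeats 1000000

noncomputable section

namespace MatchPaper

attribute [local instance 10] Classical.propDecidable

/-! ### Guarded constructions on additive groups -/

section AddGadgets

variable {A B : Type*} [AddCommGroup A] [AddCommGroup B]

/-- Lift a homomorphism to the quotient (it genuinely descends whenever it kills `S`). -/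
def liftOrZero (S : AddSubgroup A) (f : A →+ B) : A ⧸ S →+ B :=
  if h : S ≤ f.ker then QuotientAddGroup.lift S f h else 0

/-- Descend a homomorphism to quotients (genuine whenever `f S ≤ T`). -/
def descend (S : AddSubgroup A) (T : AddSubgroup B) (f : A →+ B) : A ⧸ S →+ B ⧸ T :=
  if h : S ≤ T.comap f then QuotientAddGroup.map S T f h else 0

/-- Restrict a homomorphism to subgroups (genuine whenever `f Z ≤ Z'`). -/
def restrictHom (f : A →+ B) (Z : AddSubgroup A) (Z' : AddSubgroup B) : Z →+ Z' :=
  if h : ∀ x : Z, f x ∈ Z' then (f.comp Z.subtype).codRestrict Z' (fun x => h x) else 0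

/-- The subquotient `Z / (Bd ∩ Z)`. -/
abbrev subQuot (Z Bd : AddSubgroup A) : Type _ := Z ⧸ Bd.addSubgroupOf Z

/-- The map induced by `f` on subquotients. -/
def subQuotMap (f : A →+ B) (Z Bd : AddSubgroup A) (Z' Bd' : AddSubgroup B) :
    subQuot Z Bd →+ subQuot Z' Bd' :=
  descend (Bd.addSubgroupOf Z) (Bd'.addSubgroupOf Z') (restrictHom f Z Z')

end AddGadgets

/-! ### Chain complexes of abelian groups, group actions, quotient and fixed-difference
subcomplexes, and homology -/

section Abstract

variable (X : ℤ → Type*) [∀ i, AddCommGroup (X i)]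

/-- Transport along an equality of indices. -/
def castAE {i j : ℤ} (h : i = j) : X i ≃+ X j := by subst h; exact AddEquiv.refl _

variable (d : ∀ i : ℤ, X (i + 1) →+ X i)

/-- The boundary map leaving degree `i`. -/
def dfrom (i : ℤ) : X i →+ X (i - 1) :=
  (d (i - 1)).comp (castAE X (show i = (i - 1) + 1 by ring)).toAddMonoidHom

/-- Cycles in degree `i`. -/
def cyc (i : ℤ) : AddSubgroup (X i) := (dfrom X d i).ker

/-- Boundaries in degree `i`. -/
def bdr (i : ℤ) : AddSubgroup (X i) := (d i).range

/-- Homology of the chain complex `(X, d)` in degree `i`. -/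
abbrev Hgrp (i : ℤ) : Type _ := subQuot (cyc X d i) (bdr X d i)

variable {G : Type*} [Group G] (act : G → ∀ i : ℤ, X i ≃+ X i)

/-- The subgroup `C_i^G` generated by the elements `c - g c`. -/
def gsub (i : ℤ) : AddSubgroup (X i) :=
  AddSubgroup.closure {x | ∃ (c : X i) (g : G), x = c - act g i c}

/-- The degree-`i` part of the quotient complex `C/G`. -/
abbrev QX (i : ℤ) : Type _ := X i ⧸ gsub X act i

/-- The boundary map of the quotient complex `C/G`. -/
def qd (i : ℤ) : QX X act (i + 1) →+ QX X act i :=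
  descend (gsub X act (i + 1)) (gsub X act i) (d i)

/-- Homology of the quotient complex `C/G`. -/
abbrev HQgrp (i : ℤ) : Type _ := Hgrp (QX X act) (qd X d act) i

/-- The boundary map of the subcomplex `C^G`. -/
def sd (i : ℤ) : gsub X act (i + 1) →+ gsub X act i :=
  restrictHom (d i) (gsub X act (i + 1)) (gsub X act i)

/-- Homology of the subcomplex `C^G`. -/
abbrev HSgrp (i : ℤ) : Type _ := Hgrp (fun j => gsub X act j) (sd X d act) i

/-- The projection chain map `C → C/G`. -/
def projX (i : ℤ) : X i →+ QX X act i := QuotientAddGroup.mk' _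

/-- The map `π*` induced on homology by the projection `C → C/G`. -/
def piStar (i : ℤ) : Hgrp X d i →+ HQgrp X d act i :=
  subQuotMap (projX X act i) (cyc X d i) (bdr X d i)
    (cyc (QX X act) (qd X d act) i) (bdr (QX X act) (qd X d act) i)

/-- The chain map `φ : C/G → C`, `[c] ↦ ∑ g • c`. -/
def phiX [Fintype G] (i : ℤ) : QX X act i →+ X i :=
  liftOrZero (gsub X act i) (∑ g : G, (act g i).toAddMonoidHom)

/-- The map `φ*` induced on homology by `φ`. -/
def phiStar [Fintype G] (i : ℤ) : HQgrp X d act i →+ Hgrp X d i :=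
  subQuotMap (phiX X act i) (cyc (QX X act) (qd X d act) i) (bdr (QX X act) (qd X d act) i)
    (cyc X d i) (bdr X d i)

end Abstract

/-! ### Guarded constructions on modules -/

section LinGadgets

variable (R : Type*) [CommRing R] {M N : Type*} [AddCommGroup M] [Module R M]
  [AddCommGroup N] [Module R N]

def liftOrZeroL (S : Submodule R M) (f : M →ₗ[R] N) : (M ⧸ S) →ₗ[R] N :=
  if h : S ≤ LinearMap.ker f then S.liftQ f h else 0

def descendL (S : Submodule R M) (T : Submodule R N) (f : M →ₗ[R] N) :
    (M ⧸ S) →ₗ[R] (N ⧸ T) :=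
  if h : S ≤ T.comap f then S.mapQ T f h else 0

def restrictL (f : M →ₗ[R] N) (Z : Submodule R M) (Z' : Submodule R N) : Z →ₗ[R] Z' :=
  if h : ∀ x ∈ Z, f x ∈ Z' then f.restrict h else 0

/-- The subquotient `Z / (Bd ∩ Z)`. -/
abbrev subQuotL (Z Bd : Submodule R M) : Type _ := Z ⧸ Bd.comap Z.subtype

def subQuotMapL (f : M →ₗ[R] N) (Z Bd : Submodule R M) (Z' Bd' : Submodule R N) :
    subQuotL R Z Bd →ₗ[R] subQuotL R Z' Bd' :=
  descendL R (Bd.comap Z.subtype) (Bd'.comap Z'.subtype) (restrictL R f Z Z')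

end LinGadgets

/-! ### Reduced simplicial chains and homology of a family of finite sets

A family `K : Finset V → Prop` of finite subsets of a vertex type `V` (in our applications a
simplicial complex, in particular closed under taking subsets and containing `∅`) has reduced
simplicial chain groups over a ring `R`: the degree-`d` chain group is free on the faces of
cardinality `d + 1`, i.e. we index chain groups by the cardinality `c = d + 1` of the faces,
with the empty face (cardinality `0`, degree `-1`) giving the augmentation.  Orientations are
induced by an injection `rank : V → ℕ` of the vertices into `ℕ`. -/

section Simplicial

variable (R : Type*) [CommRing R]

/-- Chains on the faces of cardinality `c` of the family `K`. -/
abbrev SChain {V : Type*} (K : Finset V → Prop) (c : ℕ) : Type _ :=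
  {σ : Finset V // K σ ∧ σ.card = c} →₀ R

/-- The basis chain of a face, or zero for a non-face. -/
def basisOrZero {V : Type*} (K : Finset V → Prop) (c : ℕ) (τ : Finset V) : SChain R K c :=
  if h : K τ ∧ τ.card = c then Finsupp.single ⟨τ, h⟩ (1 : R) else 0

/-- The simplicial boundary map, with signs determined by the ordering of the vertices via
`rank`. -/
def bdry {V : Type*} [DecidableEq V] (rank : V → ℕ) (K : Finset V → Prop) (c : ℕ) :
    SChain R K (c + 1) →ₗ[R] SChain R K c :=
  Finsupp.lsum R fun σ => LinearMap.toSpanSingleton R _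
    (∑ v ∈ σ.1, ((-1 : ℤ) ^ ((σ.1.filter fun u => rank u < rank v).card) •
      basisOrZero R K c (σ.1.erase v)))

/-- The orientation sign of a map `f` on a face `σ`: the parity of the number of inversions. -/
def mapSign {V W : Type*} (rank : V → ℕ) (rank' : W → ℕ) (f : V → W) (σ : Finset V) : ℤ :=
  (-1) ^ (((σ ×ˢ σ).filter fun p => rank p.1 < rank p.2 ∧ rank' (f p.2) < rank' (f p.1)).card)

/-- The chain map induced by a map `f` on vertices, taking orientations into account. -/
def chainMap {V W : Type*} [DecidableEq V] [DecidableEq W] (rank : V → ℕ) (rank' : W → ℕ)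
    (f : V → W) (K : Finset V → Prop) (K' : Finset W → Prop) (c : ℕ) :
    SChain R K c →ₗ[R] SChain R K' c :=
  Finsupp.lsum R fun σ => LinearMap.toSpanSingleton R _
    (mapSign rank rank' f σ.1 • basisOrZero R K' c (σ.1.image f))

/-- Cycles among the chains on faces of cardinality `c` (for `c = 0` everything is a cycle:
the boundary map leaving degree `-1` is zero). -/
def cycLow {V : Type*} [DecidableEq V] (rank : V → ℕ) (K : Finset V → Prop) :
    (c : ℕ) → Submodule R (SChain R K c)
  | 0 => ⊤
  | (m + 1) => LinearMap.ker (bdry R rank K m)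

/-- Reduced simplicial homology at the faces of cardinality `c`, i.e. in degree `c - 1`. -/
abbrev RHc {V : Type*} [DecidableEq V] (rank : V → ℕ) (K : Finset V → Prop) (c : ℕ) : Type _ :=
  subQuotL R (cycLow R rank K c) (LinearMap.range (bdry R rank K c))

/-- Reduced simplicial homology `H̃_dg(K; R)`. -/
abbrev RH {V : Type*} [DecidableEq V] (rank : V → ℕ) (K : Finset V → Prop) (dg : ℕ) : Type _ :=
  RHc R rank K (dg + 1)

end Simplicial

/-! ### The matching complex and the complexes of graphs of bounded degree -/

/-- The standard injection of pairs into `ℕ`, inducing the lexicographic order. -/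
def rankP (m : ℕ) : Fin m × Fin m → ℕ := fun p => p.1.val * m + p.2.val

/-- A face of the matching complex `M_m`: a set of edges `(i, j)`, `i < j`, of the complete
graph on `Fin m`, no two of which share an endpoint. -/
def IsMatching (m : ℕ) (σ : Finset (Fin m × Fin m)) : Prop :=
  (∀ p ∈ σ, p.1 < p.2) ∧
    ∀ p ∈ σ, ∀ q ∈ σ, p ≠ q → p.1 ≠ q.1 ∧ p.1 ≠ q.2 ∧ p.2 ≠ q.1 ∧ p.2 ≠ q.2

/-- `H̃_dg(M_m; R)`, the reduced homology of the matching complex on `m` vertices. -/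
abbrev MH (R : Type*) [CommRing R] (m dg : ℕ) : Type _ := RH R (rankP m) (IsMatching m) dg

/-- The degree of the vertex `i` in the graph `σ` (a loop `(i, i)` counts twice). -/
def degB {n : ℕ} (σ : Finset (Fin n × Fin n)) (i : Fin n) : ℕ :=
  ∑ p ∈ σ, ((if p.1 = i then 1 else 0) + (if p.2 = i then 1 else 0))

/-- A face of `BD_n^λ`: a graph on `Fin n` (loops allowed, encoded as pairs `(i, j)` with
`i ≤ j`) in which the vertex `i` has degree at most `λ i`. -/
def IsBDGraph {n : ℕ} (lam : Fin n → ℕ) (σ : Finset (Fin n × Fin n)) : Prop :=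
  (∀ p ∈ σ, p.1 ≤ p.2) ∧ ∀ i, degB σ i ≤ lam i

/-- `H̃_dg(BD_n^λ; R)`. -/
abbrev BDH (R : Type*) [CommRing R] {n : ℕ} (lam : Fin n → ℕ) (dg : ℕ) : Type _ :=
  RH R (rankP n) (IsBDGraph lam) dg

/-! ### The Young group action on the matching complex -/

/-- The action of a permutation of the vertices on the edges of the complete graph. -/
def emap {m : ℕ} (g : Equiv.Perm (Fin m)) : Fin m × Fin m → Fin m × Fin m :=
  fun p => (min (g p.1) (g p.2), max (g p.1) (g p.2))

/-- The quotient map on edges induced by a surjection `kap` on vertices (whose fibers are the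
blocks `U_i` of the partition). -/
def kmap {N n : ℕ} (kap : Fin N → Fin n) : Fin N × Fin N → Fin n × Fin n :=
  fun p => (min (kap p.1) (kap p.2), max (kap p.1) (kap p.2))

/-- Membership of a permutation in the Young group: it preserves each block of the partition
determined by `kap`. -/
def KeepsBlocks {N n : ℕ} (kap : Fin N → Fin n) (g : Equiv.Perm (Fin N)) : Prop :=
  ∀ x, kap (g x) = kap x

section YoungAction

variable (R : Type*) [CommRing R]

/-- The action of a permutation `g` of the `N` vertices on chains. -/
def actC (N : ℕ) (K : Finset (Fin N × Fin N) → Prop) (g : Equiv.Perm (Fin N)) (c : ℕ) :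
    SChain R K c →ₗ[R] SChain R K c :=
  chainMap R (rankP N) (rankP N) (emap g) K K c

/-- The submodule of chains generated by the elements `c - g c`, `g` in the Young group. -/
def ysub (N n : ℕ) (kap : Fin N → Fin n) (K : Finset (Fin N × Fin N) → Prop) (c : ℕ) :
    Submodule R (SChain R K c) :=
  Submodule.span R {x | ∃ (ch : SChain R K c) (g : Equiv.Perm (Fin N)),
    KeepsBlocks kap g ∧ x = ch - actC R N K g c ch}

/-- The chains of the quotient complex `C̃/S_λ`. -/
abbrev QC (N n : ℕ) (kap : Fin N → Fin n) (K : Finset (Fin N × Fin N) → Prop) (c : ℕ) :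
    Type _ :=
  SChain R K c ⧸ ysub R N n kap K c

/-- The boundary map of the quotient complex `C̃/S_λ`. -/
def qbdry (N n : ℕ) (kap : Fin N → Fin n) (K : Finset (Fin N × Fin N) → Prop) (c : ℕ) :
    QC R N n kap K (c + 1) →ₗ[R] QC R N n kap K c :=
  descendL R (ysub R N n kap K (c + 1)) (ysub R N n kap K c) (bdry R (rankP N) K c)

/-- Homology of the quotient complex `C̃(M_N)/S_λ` in degree `dg`. -/
abbrev QMH (N n : ℕ) (kap : Fin N → Fin n) (dg : ℕ) : Type _ :=
  subQuotL R (LinearMap.ker (qbdry R N n kap (IsMatching N) dg))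
    (LinearMap.range (qbdry R N n kap (IsMatching N) (dg + 1)))

/-- The chain map `φ : C̃/S_λ → C̃`, `[c] ↦ ∑_{g ∈ S_λ} g c`. -/
def phiC (N n : ℕ) (kap : Fin N → Fin n) (K : Finset (Fin N × Fin N) → Prop) (c : ℕ) :
    QC R N n kap K c →ₗ[R] SChain R K c :=
  liftOrZeroL R (ysub R N n kap K c)
    (∑ g ∈ Finset.univ.filter (fun g : Equiv.Perm (Fin N) => ∀ x, kap (g x) = kap x),
      actC R N K g c)

/-- The map `φ* : H_dg(C̃(M_N)/S_λ) → H̃_dg(M_N; R)` induced by `φ`. -/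
def phiStarM (N n : ℕ) (kap : Fin N → Fin n) (dg : ℕ) :
    QMH R N n kap dg →ₗ[R] MH R N dg :=
  subQuotMapL R (phiC R N n kap (IsMatching N) (dg + 1))
    (LinearMap.ker (qbdry R N n kap (IsMatching N) dg))
    (LinearMap.range (qbdry R N n kap (IsMatching N) (dg + 1)))
    (cycLow R (rankP N) (IsMatching N) (dg + 1))
    (LinearMap.range (bdry R (rankP N) (IsMatching N) (dg + 1)))

end YoungAction

/-! ### The subfamilies `Δ_λ` and `Γ_λ` of the matching complex -/

/-- `σ` contains two distinct edges `ab`, `cd` with `a, c` in the same block and `b, d` in the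
same block. -/
def InDelta {N n : ℕ} (kap : Fin N → Fin n) (σ : Finset (Fin N × Fin N)) : Prop :=
  ∃ p ∈ σ, ∃ q ∈ σ, p ≠ q ∧
    ((kap p.1 = kap q.1 ∧ kap p.2 = kap q.2) ∨ (kap p.1 = kap q.2 ∧ kap p.2 = kap q.1))

/-- A face of `Δ_λ`. -/
def IsDelta {N n : ℕ} (kap : Fin N → Fin n) (σ : Finset (Fin N × Fin N)) : Prop :=
  IsMatching N σ ∧ InDelta kap σ

/-- A face of `Γ_λ = M_N \ Δ_λ`. -/
def IsGamma {N n : ℕ} (kap : Fin N → Fin n) (σ : Finset (Fin N × Fin N)) : Prop :=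
  IsMatching N σ ∧ ¬ InDelta kap σ

section YoungMore

variable (R : Type*) [CommRing R]

/-- The map `κ̂ : C̃(Γ_λ)/S_λ → C̃(BD_n^λ)`, `[c] ↦ κ(c)`. -/
def khat (N n : ℕ) (kap : Fin N → Fin n) (lam : Fin n → ℕ) (c : ℕ) :
    QC R N n kap (IsGamma kap) c →ₗ[R] SChain R (IsBDGraph lam) c :=
  liftOrZeroL R (ysub R N n kap (IsGamma kap) c)
    (chainMap R (rankP N) (rankP n) (kmap kap) (IsGamma kap) (IsBDGraph lam) c)

/-- The boundary map of the subcomplex `C̃(M_N; R)^{S_λ}`. -/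
def sbdry (N n : ℕ) (kap : Fin N → Fin n) (c : ℕ) :
    ysub R N n kap (IsMatching N) (c + 1) →ₗ[R] ysub R N n kap (IsMatching N) c :=
  restrictL R (bdry R (rankP N) (IsMatching N) c)
    (ysub R N n kap (IsMatching N) (c + 1)) (ysub R N n kap (IsMatching N) c)

/-- Homology of the subcomplex `C̃(M_N; R)^{S_λ}` in degree `dg`: the cycles of the
subcomplex (elements of the subcomplex with vanishing boundary) modulo the boundaries of
elements of the subcomplex. -/
abbrev SubH (N n : ℕ) (kap : Fin N → Fin n) (dg : ℕ) : Type _ :=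
  subQuotL R
    (ysub R N n kap (IsMatching N) (dg + 1) ⊓ cycLow R (rankP N) (IsMatching N) (dg + 1))
    ((ysub R N n kap (IsMatching N) (dg + 1 + 1)).map (bdry R (rankP N) (IsMatching N) (dg + 1)))

/-! ### Inclusion maps between matching complexes -/

/-- The chain map induced by the inclusion `M_m ⊆ M_{m'}`. -/
def inclChain (m m' : ℕ) (h : m ≤ m') (c : ℕ) :
    SChain R (IsMatching m) c →ₗ[R] SChain R (IsMatching m') c :=
  chainMap R (rankP m) (rankP m') (fun p => (Fin.castLE h p.1, Fin.castLE h p.2))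
    (IsMatching m) (IsMatching m') c

/-- The map `H̃_dg(M_m; R) → H̃_dg(M_{m'}; R)` induced by the inclusion. -/
def inclStar (m m' : ℕ) (h : m ≤ m') (dg : ℕ) : MH R m dg →ₗ[R] MH R m' dg :=
  subQuotMapL R (inclChain R m m' h (dg + 1))
    (cycLow R (rankP m) (IsMatching m) (dg + 1))
    (LinearMap.range (bdry R (rankP m) (IsMatching m) (dg + 1)))
    (cycLow R (rankP m') (IsMatching m') (dg + 1))
    (LinearMap.range (bdry R (rankP m') (IsMatching m') (dg + 1)))

/-! ### The pair `(M_m, M_m \ e)`, where `e` is the last edge -/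

/-- The edge `e` between the last two of the `m` vertices. -/
def eEdge (m : ℕ) (h : 2 ≤ m) : Fin m × Fin m := (⟨m - 2, by omega⟩, ⟨m - 1, by omega⟩)

/-- A face of `M_m \ e`: a matching not containing the edge `e`. -/
def MnMinusE (m : ℕ) (h : 2 ≤ m) (σ : Finset (Fin m × Fin m)) : Prop :=
  IsMatching m σ ∧ eEdge m h ∉ σ

/-- Pass from a set of edges avoiding the last two vertices of `Fin m` to a set of edges on
`Fin (m - 2)`. -/
def shrink (m : ℕ) (σ : Finset (Fin m × Fin m)) : Finset (Fin (m - 2) × Fin (m - 2)) :=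
  (σ.filter fun p => p.1.val < m - 2 ∧ p.2.val < m - 2).attach.image
    fun p => (⟨p.1.1.val, (Finset.mem_filter.mp p.2).2.1⟩,
              ⟨p.1.2.val, (Finset.mem_filter.mp p.2).2.2⟩)

/-- The chain map realizing the composition
`C̃(M_m) → C̃(M_m, M_m \ e) ≅ C̃(M_{m - 2})[1]`: a face `σ` containing `e` is written as
`σ = ± e ∧ w` and sent to `± w`, viewed in the matching complex on the remaining `m - 2`
vertices; a face not containing `e` is sent to zero. -/
def theta (m : ℕ) (hm : 2 ≤ m) (c : ℕ) :
    SChain R (IsMatching m) (c + 1) →ₗ[R] SChain R (IsMatching (m - 2)) c :=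
  Finsupp.lsum R fun σ => LinearMap.toSpanSingleton R _
    (if eEdge m hm ∈ σ.1 then
      ((-1 : ℤ) ^ c) • basisOrZero R (IsMatching (m - 2)) c (shrink m (σ.1.erase (eEdge m hm)))
     else 0)

/-- The map `H̃_dg(M_m \ e; R) → H̃_dg(M_m; R)` induced by the inclusion. -/
def inclEStar (m : ℕ) (hm : 2 ≤ m) (dg : ℕ) :
    RH R (rankP m) (MnMinusE m hm) dg →ₗ[R] MH R m dg :=
  subQuotMapL R (chainMap R (rankP m) (rankP m) id (MnMinusE m hm) (IsMatching m) (dg + 1))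
    (cycLow R (rankP m) (MnMinusE m hm) (dg + 1))
    (LinearMap.range (bdry R (rankP m) (MnMinusE m hm) (dg + 1)))
    (cycLow R (rankP m) (IsMatching m) (dg + 1))
    (LinearMap.range (bdry R (rankP m) (IsMatching m) (dg + 1)))

/-- The composition `H̃_dg(M_m; R) → H_dg(M_m, M_m \ e; R) ≅ H̃_{dg - 1}(M_{m - 2}; R)` of the
map to relative homology with the canonical isomorphism. -/
def thetaStar (m : ℕ) (hm : 2 ≤ m) (dg : ℕ) :
    MH R m dg →ₗ[R] RHc R (rankP (m - 2)) (IsMatching (m - 2)) dg :=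
  subQuotMapL R (theta R m hm dg)
    (cycLow R (rankP m) (IsMatching m) (dg + 1))
    (LinearMap.range (bdry R (rankP m) (IsMatching m) (dg + 1)))
    (cycLow R (rankP (m - 2)) (IsMatching (m - 2)) dg)
    (LinearMap.range (bdry R (rankP (m - 2)) (IsMatching (m - 2)) dg))

end YoungMore

end MatchPaper

end
section Aux
open MatchPaper

variable {X : ℤ → Type} [∀ i, AddCommGroup (X i)] {G : Type} [Group G] [Fintype G]
variable (d : ∀ i : ℤ, X (i + 1) →+ X i) (act : G → ∀ i : ℤ, X i ≃+ X i)

lemma aux_cast_act {i j : ℤ} (h : i = j) (g : G) (x : X i) :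
    castAE X h (act g i x) = act g j (castAE X h x) := by subst h; rfl

lemma aux_gsub_gen (i : ℤ) (g : G) (x : X i) : x - act g i x ∈ gsub X act i :=
  AddSubgroup.subset_closure ⟨x, g, rfl⟩

lemma aux_proj_act (i : ℤ) (g : G) (x : X i) :
    projX X act i (act g i x) = projX X act i x := by
  have h1 : ((act g i x : X i) : X i ⧸ gsub X act i) = (x : X i ⧸ gsub X act i) :=
    QuotientAddGroup.eq_iff_sub_mem.mpr
      (by simpa using (gsub X act i).neg_mem (aux_gsub_gen act i g x))
  exact h1

lemma aux_phi0_ker (hmul : ∀ (g h : G) (i : ℤ) (x : X i), act (g * h) i x = act g i (act h i x))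
    (i : ℤ) : gsub X act i ≤ (∑ g : G, (act g i).toAddMonoidHom).ker := by
  rw [gsub, AddSubgroup.closure_le]
  rintro _ ⟨c, g, rfl⟩
  simp only [SetLike.mem_coe, AddMonoidHom.mem_ker, AddMonoidHom.finset_sum_apply,
    AddEquiv.coe_toAddMonoidHom, map_sub, Finset.sum_sub_distrib, sub_eq_zero]
  exact (Fintype.sum_equiv (Equiv.mulRight g) (fun h => act h i (act g i c))
    (fun k => act k i c) (fun h => by simp only [Equiv.coe_mulRight]; exact (hmul h g i c).symm)).symm

lemma aux_phiX_mk (hmul : ∀ (g h : G) (i : ℤ) (x : X i), act (g * h) i x = act g i (act h i x))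
    (i : ℤ) (x : X i) :
    phiX X act i (projX X act i x) = ∑ g : G, act g i x := by
  rw [phiX, liftOrZero, dif_pos (aux_phi0_ker act hmul i)]
  simp [projX]

lemma aux_d_gsub (hd : ∀ (g : G) (i : ℤ) (x : X (i + 1)), d i (act g (i + 1) x) = act g i (d i x))
    (i : ℤ) : gsub X act (i + 1) ≤ (gsub X act i).comap (d i) := by
  rw [gsub, AddSubgroup.closure_le]
  rintro _ ⟨c, g, rfl⟩
  simp only [SetLike.mem_coe, AddSubgroup.mem_comap, map_sub, hd g i c]
  exact aux_gsub_gen act i g (d i c)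

lemma aux_qd_mk (hd : ∀ (g : G) (i : ℤ) (x : X (i + 1)), d i (act g (i + 1) x) = act g i (d i x))
    (i : ℤ) (x : X (i + 1)) :
    qd X d act i (projX X act (i + 1) x) = projX X act i (d i x) := by
  rw [qd, descend, dif_pos (aux_d_gsub d act hd i)]
  rfl

lemma aux_dfromQ_mk
    (hd : ∀ (g : G) (i : ℤ) (x : X (i + 1)), d i (act g (i + 1) x) = act g i (d i x))
    (i : ℤ) (x : X i) :
    dfrom (QX X act) (qd X d act) i (projX X act i x) = projX X act (i - 1) (dfrom X d i x) := by
  have hc : ∀ (j : ℤ) (h : i = j), castAE (QX X act) h (projX X act i x)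
      = projX X act j (castAE X h x) := by rintro j rfl; rfl
  rw [dfrom, AddMonoidHom.comp_apply, AddEquiv.coe_toAddMonoidHom, hc,
    aux_qd_mk d act hd, dfrom, AddMonoidHom.comp_apply]
  rfl

lemma aux_dfrom_act
    (hd : ∀ (g : G) (i : ℤ) (x : X (i + 1)), d i (act g (i + 1) x) = act g i (d i x))
    (i : ℤ) (g : G) (x : X i) :
    dfrom X d i (act g i x) = act g (i - 1) (dfrom X d i x) := by
  rw [dfrom, AddMonoidHom.comp_apply, AddEquiv.coe_toAddMonoidHom,
    aux_cast_act act _ g x, hd g (i - 1)]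
  rfl

end Aux

section Aux2
open MatchPaper

variable {X : ℤ → Type} [∀ i, AddCommGroup (X i)] {G : Type} [Group G] [Fintype G]
variable (d : ∀ i : ℤ, X (i + 1) →+ X i) (act : G → ∀ i : ℤ, X i ≃+ X i)

lemma aux_restrict_apply {A B : Type} [AddCommGroup A] [AddCommGroup B] (f : A →+ B)
    (Z : AddSubgroup A) (Z' : AddSubgroup B) (h : ∀ x : Z, f x ∈ Z') (x : Z) :
    (restrictHom f Z Z' x : B) = f x := by
  rw [restrictHom, dif_pos h]; rfl

variable (hmul : ∀ (g h : G) (i : ℤ) (x : X i), act (g * h) i x = act g i (act h i x))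
variable (hd : ∀ (g : G) (i : ℤ) (x : X (i + 1)), d i (act g (i + 1) x) = act g i (d i x))

include hd in
lemma aux_proj_cyc (i : ℤ) :
    ∀ x : cyc X d i, projX X act i (x : X i) ∈ cyc (QX X act) (qd X d act) i := by
  rintro ⟨x, hx⟩
  simp only [cyc, AddMonoidHom.mem_ker] at hx ⊢
  rw [aux_dfromQ_mk d act hd, hx, map_zero]

include hd in
lemma aux_proj_bdr (i : ℤ) :
    (bdr X d i).addSubgroupOf (cyc X d i) ≤
      ((bdr (QX X act) (qd X d act) i).addSubgroupOf (cyc (QX X act) (qd X d act) i)).comap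
        (restrictHom (projX X act i) (cyc X d i) (cyc (QX X act) (qd X d act) i)) := by
  rintro ⟨x, hx⟩ hb
  simp only [AddSubgroup.mem_addSubgroupOf] at hb
  obtain ⟨w, hw⟩ := hb
  simp only [AddSubgroup.mem_comap, AddSubgroup.mem_addSubgroupOf]
  rw [aux_restrict_apply _ _ _ (aux_proj_cyc d act hd i)]
  exact ⟨projX X act (i + 1) w, by rw [aux_qd_mk d act hd, hw]⟩

include hd in
lemma aux_piStar_mk (i : ℤ) (z : cyc X d i) :
    piStar X d act i (QuotientAddGroup.mk z) =
      QuotientAddGroup.mk ⟨projX X act i (z : X i),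
        aux_proj_cyc d act hd i z⟩ := by
  rw [piStar, subQuotMap, descend, dif_pos (aux_proj_bdr d act hd i),
    QuotientAddGroup.map_mk]
  exact congrArg _ (Subtype.ext (aux_restrict_apply _ _ _ (aux_proj_cyc d act hd i) z))

include hmul hd in
lemma aux_dfrom_phi (i : ℤ) (q : QX X act i) :
    dfrom X d i (phiX X act i q) = phiX X act (i - 1) (dfrom (QX X act) (qd X d act) i q) := by
  induction q using QuotientAddGroup.induction_on with
  | H x =>
    rw [show ((x : X i) : QX X act i) = projX X act i x from rfl,
      aux_phiX_mk act hmul, aux_dfromQ_mk d act hd, aux_phiX_mk act hmul, map_sum]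
    exact Finset.sum_congr rfl fun g _ => aux_dfrom_act d act hd i g x

include hmul hd in
lemma aux_phi_cyc (i : ℤ) :
    ∀ q : cyc (QX X act) (qd X d act) i, phiX X act i (q : QX X act i) ∈ cyc X d i := by
  rintro ⟨q, hq⟩
  simp only [cyc, AddMonoidHom.mem_ker] at hq ⊢
  rw [aux_dfrom_phi d act hmul hd, hq, map_zero]

include hmul hd in
lemma aux_phi_bdr (i : ℤ) :
    ((bdr (QX X act) (qd X d act) i).addSubgroupOf (cyc (QX X act) (qd X d act) i)) ≤
      ((bdr X d i).addSubgroupOf (cyc X d i)).comap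
        (restrictHom (phiX X act i) (cyc (QX X act) (qd X d act) i) (cyc X d i)) := by
  rintro ⟨q, hq⟩ hb
  simp only [AddSubgroup.mem_addSubgroupOf] at hb
  obtain ⟨p, hp⟩ := hb
  simp only [AddSubgroup.mem_comap, AddSubgroup.mem_addSubgroupOf]
  rw [aux_restrict_apply _ _ _ (aux_phi_cyc d act hmul hd i)]
  show phiX X act i q ∈ bdr X d i
  subst hp
  induction p using QuotientAddGroup.induction_on with
  | H w =>
    refine ⟨∑ g : G, act g (i + 1) w, ?_⟩
    rw [map_sum, show ((w : X (i+1)) : QX X act (i+1)) = projX X act (i+1) w from rfl,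
      aux_qd_mk d act hd, aux_phiX_mk act hmul]
    exact Finset.sum_congr rfl fun g _ => hd g i w

include hmul hd in
lemma aux_phiStar_mk (i : ℤ) (z : cyc (QX X act) (qd X d act) i) :
    phiStar X d act i (QuotientAddGroup.mk z) =
      QuotientAddGroup.mk ⟨phiX X act i (z : QX X act i),
        aux_phi_cyc d act hmul hd i z⟩ := by
  rw [phiStar, subQuotMap, descend, dif_pos (aux_phi_bdr d act hmul hd i),
    QuotientAddGroup.map_mk]
  exact congrArg _ (Subtype.ext (aux_restrict_apply _ _ _ (aux_phi_cyc d act hmul hd i) z))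

include hmul hd in
lemma aux_comp (i : ℤ) (y : HQgrp X d act i) :
    piStar X d act i (phiStar X d act i y) = Fintype.card G • y := by
  induction y using QuotientAddGroup.induction_on with
  | H z =>
    obtain ⟨q, hq⟩ := z
    revert hq
    induction q using QuotientAddGroup.induction_on with
    | H x =>
      intro hq
      rw [aux_phiStar_mk d act hmul hd, aux_piStar_mk d act hd]
      have key : projX X act i (phiX X act i
          ((⟨((x : X i) : QX X act i), hq⟩ : cyc (QX X act) (qd X d act) i) : QX X act i))
          = ((Fintype.card G • (⟨((x : X i) : QX X act i), hq⟩ :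
              cyc (QX X act) (qd X d act) i) : cyc (QX X act) (qd X d act) i) : QX X act i) := by
        show projX X act i (phiX X act i ((x : X i) : QX X act i))
          = Fintype.card G • (((x : X i) : QX X act i))
        rw [show ((x : X i) : QX X act i) = projX X act i x from rfl, aux_phiX_mk act hmul,
          map_sum, Finset.sum_congr rfl fun g _ => aux_proj_act act i g x]
        simp
      have hsm : Fintype.card G • (QuotientAddGroup.mk ⟨((x : X i) : QX X act i), hq⟩ :
            HQgrp X d act i)
          = QuotientAddGroup.mk (Fintype.card G • (⟨((x : X i) : QX X act i), hq⟩ :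
              cyc (QX X act) (qd X d act) i)) :=
        (map_nsmul (QuotientAddGroup.mk' _) _ _).symm
      rw [hsm]
      exact congrArg _ (Subtype.ext key)

end Aux2

open MatchPaper in
/-- If the torsion subgroup of `H_d(C)` has finite exponent `e`, then the
torsion subgroup of `H_d(C/G)` has finite exponent dividing `|G| ⬝ e`. -/
theorem exponent_of_torsion_of_quotient_homology
    (X : ℤ → Type) [∀ i, AddCommGroup (X i)] (d : ∀ i : ℤ, X (i + 1) →+ X i)
    (hdd : ∀ (i : ℤ) (x : X (i + 1 + 1)), d i (d (i + 1) x) = 0)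
    {G : Type} [Group G] [Fintype G] (act : G → ∀ i : ℤ, X i ≃+ X i)
    (hmul : ∀ (g h : G) (i : ℤ) (x : X i), act (g * h) i x = act g i (act h i x))
    (hd : ∀ (g : G) (i : ℤ) (x : X (i + 1)), d i (act g (i + 1) x) = act g i (d i x))
    (i : ℤ) (e : ℕ) (he : 0 < e)
    (hexp : ∀ x : Hgrp X d i, IsOfFinAddOrder x → e • x = 0) :
    ∀ y : HQgrp X d act i, IsOfFinAddOrder y → (Fintype.card G * e) • y = 0 := by
  intro y hy
  obtain ⟨n, hn, hny⟩ := isOfFinAddOrder_iff_nsmul_eq_zero.mp hy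
  have h1 : IsOfFinAddOrder (phiStar X d act i y) :=
    isOfFinAddOrder_iff_nsmul_eq_zero.mpr ⟨n, hn, by rw [← map_nsmul, hny, map_zero]⟩
  have h2 := hexp _ h1
  have h3 := aux_comp d act hmul hd i y
  rw [mul_comm, ← smul_smul, ← h3, ← map_nsmul, h2, map_zero]
end

section
/- The map κ, applied to faces, is a dimension-preserving surjective map from the simplicial complex Γ_λ onto the simplicial complex BD_n^λ: for every σ ∈ Γ_λ one has κ(σ) ∈ BD_n^λ and |κ(σ)| = |σ|, and every graph in BD_n^λ equals κ(σ) for some σ ∈ Γ_λ. -/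
set_option synthInstance.maxHeartbeats 1000000
set_option maxHeartbeats 1000000

noncomputable section

namespace MatchPaper

attribute [local instance 10] Classical.propDecidable

end MatchPaper

end
section KappaAux

open MatchPaper Finset

private lemma minmax_eq_iff' {m : ℕ} (a b c d : Fin m) :
    (min a b = min c d ∧ max a b = max c d) ↔ ((a = c ∧ b = d) ∨ (a = d ∧ b = c)) := by
  simp only [Fin.ext_iff]
  have h1 : (min a b).val = min a.val b.val := rfl
  have h2 : (max a b).val = max a.val b.val := rfl
  have h3 : (min c d).val = min c.val d.val := rfl
  have h4 : (max c d).val = max c.val d.val := rfl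
  rw [h1, h2, h3, h4]
  omega

private lemma kmap_eq_iff' {N n : ℕ} (kap : Fin N → Fin n) (p q : Fin N × Fin N) :
    kmap kap p = kmap kap q ↔
      ((kap p.1 = kap q.1 ∧ kap p.2 = kap q.2) ∨ (kap p.1 = kap q.2 ∧ kap p.2 = kap q.1)) := by
  rw [show kmap kap p = (min (kap p.1) (kap p.2), max (kap p.1) (kap p.2)) from rfl,
    show kmap kap q = (min (kap q.1) (kap q.2), max (kap q.1) (kap q.2)) from rfl,
    Prod.ext_iff]
  exact minmax_eq_iff' _ _ _ _

private lemma injOn_iff_not_inDelta {N n : ℕ} (kap : Fin N → Fin n)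
    (σ : Finset (Fin N × Fin N)) :
    Set.InjOn (kmap kap) ↑σ ↔ ¬ InDelta kap σ := by
  constructor
  · rintro hinj ⟨p, hp, q, hq, hne, hd⟩
    exact hne (hinj hp hq ((kmap_eq_iff' kap p q).mpr hd))
  · intro hnd p hp q hq hpq
    by_contra hne
    exact hnd ⟨p, hp, q, hq, hne, (kmap_eq_iff' kap p q).mp hpq⟩

private lemma degB_image' {N n : ℕ} (kap : Fin N → Fin n) (σ : Finset (Fin N × Fin N))
    (hm : IsMatching N σ) (hinj : Set.InjOn (kmap kap) ↑σ) (i : Fin n) :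
    degB (σ.image (kmap kap)) i
      = ((σ.biUnion fun p => ({p.1, p.2} : Finset (Fin N))).filter fun x => kap x = i).card := by
  have hd : (↑σ : Set (Fin N × Fin N)).PairwiseDisjoint
      (fun p : Fin N × Fin N => ({p.1, p.2} : Finset (Fin N))) := by
    intro p hp q hq hpq
    obtain ⟨h1, h2, h3, h4⟩ := hm.2 p hp q hq hpq
    rw [Function.onFun, Finset.disjoint_left]
    intro x hx hx'
    simp only [Finset.mem_insert, Finset.mem_singleton] at hx hx'
    rcases hx with rfl | rfl <;> rcases hx' with h | h <;> simp_all
  calc degB (σ.image (kmap kap)) i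
      = ∑ p ∈ σ, ((if (kmap kap p).1 = i then 1 else 0)
          + (if (kmap kap p).2 = i then 1 else 0)) := by
        unfold degB
        exact Finset.sum_image fun p hp q hq h => hinj hp hq h
    _ = ∑ p ∈ σ, ∑ x ∈ ({p.1, p.2} : Finset (Fin N)), (if kap x = i then 1 else 0) := by
        refine Finset.sum_congr rfl fun p hp => ?_
        rw [Finset.sum_pair (hm.1 p hp).ne]
        show (if min (kap p.1) (kap p.2) = i then 1 else 0)
            + (if max (kap p.1) (kap p.2) = i then 1 else 0) = _
        rcases le_total (kap p.1) (kap p.2) with h | h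
        · rw [min_eq_left h, max_eq_right h]
        · rw [min_eq_right h, max_eq_left h, add_comm]
    _ = _ := by rw [Finset.card_filter, Finset.sum_biUnion hd]

private lemma ends_mem {N : ℕ} (σ : Finset (Fin N × Fin N)) (q : Fin N × Fin N)
    (hq : q ∈ σ) : q.1 ∈ σ.biUnion (fun p => ({p.1, p.2} : Finset (Fin N)))
      ∧ q.2 ∈ σ.biUnion (fun p => ({p.1, p.2} : Finset (Fin N))) := by
  constructor <;> exact Finset.mem_biUnion.mpr ⟨q, hq, by simp⟩

end KappaAux

open MatchPaper in
/-- `κ` is a dimension-preserving surjective map from `Γ_λ` onto `BD_n^λ`. -/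
theorem kappa_dimension_preserving_surjection
    (N n : ℕ) (lam : Fin n → ℕ) (kap : Fin N → Fin n)
    (hcard : ∀ i : Fin n, (Finset.univ.filter fun x => kap x = i).card = lam i) :
    (∀ σ : Finset (Fin N × Fin N), IsGamma kap σ →
      IsBDGraph lam (σ.image (kmap kap)) ∧ (σ.image (kmap kap)).card = σ.card) ∧
    ∀ τ : Finset (Fin n × Fin n), IsBDGraph lam τ →
      ∃ σ : Finset (Fin N × Fin N), IsGamma kap σ ∧ σ.image (kmap kap) = τ := by
  classical
  constructor
  · -- dimension preserving and lands in BD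
    rintro σ ⟨hm, hnd⟩
    have hinj : Set.InjOn (kmap kap) ↑σ := (injOn_iff_not_inDelta kap σ).mpr hnd
    refine ⟨⟨?_, ?_⟩, Finset.card_image_of_injOn hinj⟩
    · intro q hq
      obtain ⟨p, _, rfl⟩ := Finset.mem_image.mp hq
      exact min_le_max
    · intro i
      rw [degB_image' kap σ hm hinj i, ← hcard i]
      exact Finset.card_le_card (Finset.filter_subset_filter _ (Finset.subset_univ _))
  · -- surjectivity
    suffices main : ∀ (k : ℕ) (τ : Finset (Fin n × Fin n)), τ.card = k → IsBDGraph lam τ →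
        ∃ σ : Finset (Fin N × Fin N), IsGamma kap σ ∧ σ.image (kmap kap) = τ by
      intro τ hτ; exact main τ.card τ rfl hτ
    intro k
    induction k with
    | zero =>
      intro τ hc _
      rw [Finset.card_eq_zero] at hc
      subst hc
      exact ⟨∅, ⟨⟨fun p hp => absurd hp (by simp), fun p hp => absurd hp (by simp)⟩,
        fun ⟨p, hp, _⟩ => absurd hp (by simp)⟩, by simp⟩
    | succ k ih =>
      intro τ hc hτ
      obtain ⟨e, he⟩ := Finset.card_pos.mp (by omega : 0 < τ.card)
      set τ' := τ.erase e with hτ'def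
      have hc' : τ'.card = k := by
        rw [hτ'def, Finset.card_erase_of_mem he, hc]
        omega
      have hτ'bd : IsBDGraph lam τ' := by
        refine ⟨fun p hp => hτ.1 p (Finset.mem_of_mem_erase hp), fun i => le_trans ?_ (hτ.2 i)⟩
        exact Finset.sum_le_sum_of_subset (Finset.erase_subset _ _)
      obtain ⟨σ', ⟨hm', hnd'⟩, himg⟩ := ih τ' hc' hτ'bd
      have hinj' : Set.InjOn (kmap kap) ↑σ' := (injOn_iff_not_inDelta kap σ').mpr hnd'
      set B : Finset (Fin N) := σ'.biUnion fun p => ({p.1, p.2} : Finset (Fin N)) with hBdef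
      have hdeg : ∀ i, degB τ' i
          + ((if e.1 = i then 1 else 0) + (if e.2 = i then 1 else 0)) = degB τ i := by
        intro i
        unfold degB
        rw [hτ'def]
        exact Finset.sum_erase_add τ _ he
      have hfree : ∀ i : Fin n,
          (Finset.univ.filter fun x => kap x = i ∧ x ∉ B).card + degB τ' i = lam i := by
        intro i
        have hsplit := Finset.card_filter_add_card_filter_not
          (s := Finset.univ.filter fun x => kap x = i) (p := fun x => x ∈ B)
        have h1 : (Finset.univ.filter fun x => kap x = i).filter (fun x => x ∈ B)
            = B.filter fun x => kap x = i := by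
          ext x; simp [and_comm]
        have h2 : (Finset.univ.filter fun x => kap x = i).filter (fun x => ¬ x ∈ B)
            = Finset.univ.filter fun x => kap x = i ∧ x ∉ B := by
          ext x; simp [and_comm]
        rw [h1, h2, hcard i] at hsplit
        rw [← hsplit, ← degB_image' kap σ' hm' hinj' i, himg, add_comm]
      have hfreecard : ∀ i : Fin n,
          (if e.1 = i then 1 else 0) + (if e.2 = i then 1 else 0)
            ≤ (Finset.univ.filter fun x => kap x = i ∧ x ∉ B).card := by
        intro i
        have h1 := hfree i
        have h2 := hdeg i
        have h3 := hτ.2 i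
        omega
      have h12 : e.1 ≤ e.2 := hτ.1 e he
      obtain ⟨a, b, hab, ha, hb, haB, hbB⟩ :
          ∃ a b : Fin N, a ≠ b ∧ kap a = e.1 ∧ kap b = e.2 ∧ a ∉ B ∧ b ∉ B := by
        by_cases hee : e.1 = e.2
        · have h2 : 1 < (Finset.univ.filter fun x => kap x = e.1 ∧ x ∉ B).card := by
            have := hfreecard e.1
            rw [if_pos rfl, if_pos hee.symm] at this
            omega
          obtain ⟨a, haF, b, hbF, hab⟩ := Finset.one_lt_card.mp h2
          simp only [Finset.mem_filter, Finset.mem_univ, true_and] at haF hbF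
          exact ⟨a, b, hab, haF.1, hee ▸ hbF.1, haF.2, hbF.2⟩
        · have h2 : 0 < (Finset.univ.filter fun x => kap x = e.1 ∧ x ∉ B).card := by
            have := hfreecard e.1
            rw [if_pos rfl] at this
            omega
          have h3 : 0 < (Finset.univ.filter fun x => kap x = e.2 ∧ x ∉ B).card := by
            have := hfreecard e.2
            rw [if_neg hee, if_pos rfl] at this
            omega
          obtain ⟨a, haF⟩ := Finset.card_pos.mp h2
          obtain ⟨b, hbF⟩ := Finset.card_pos.mp h3
          simp only [Finset.mem_filter, Finset.mem_univ, true_and] at haF hbF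
          refine ⟨a, b, fun h => hee ?_, haF.1, hbF.1, haF.2, hbF.2⟩
          rw [← haF.1, ← hbF.1, h]
      set pp : Fin N × Fin N := (min a b, max a b) with hppdef
      have hpp12 : pp.1 < pp.2 := min_lt_max.mpr hab
      have hppB : pp.1 ∉ B ∧ pp.2 ∉ B := by
        constructor
        · rcases min_choice a b with h | h <;> · show min a b ∉ B; rw [h]; assumption
        · rcases max_choice a b with h | h <;> · show max a b ∉ B; rw [h]; assumption
      have hke : kmap kap pp = e := by
        show (min (kap pp.1) (kap pp.2), max (kap pp.1) (kap pp.2)) = e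
        have hset : ({kap pp.1, kap pp.2} : Finset (Fin n)) = {kap a, kap b} := by
          rcases le_total a b with h | h
          · rw [show pp.1 = a from min_eq_left h, show pp.2 = b from max_eq_right h]
          · rw [show pp.1 = b from min_eq_right h, show pp.2 = a from max_eq_left h,
              Finset.pair_comm]
        have hmm : min (kap pp.1) (kap pp.2) = min (kap a) (kap b)
            ∧ max (kap pp.1) (kap pp.2) = max (kap a) (kap b) := by
          rcases le_total a b with h | h
          · rw [show pp.1 = a from min_eq_left h, show pp.2 = b from max_eq_right h]
            exact ⟨rfl, rfl⟩
          · rw [show pp.1 = b from min_eq_right h, show pp.2 = a from max_eq_left h]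
            exact ⟨min_comm _ _, max_comm _ _⟩
        rw [hmm.1, hmm.2, ha, hb, min_eq_left h12, max_eq_right h12]
      have hmσ : IsMatching N (insert pp σ') := by
        constructor
        · intro q hq
          rcases Finset.mem_insert.mp hq with rfl | hq
          · exact hpp12
          · exact hm'.1 q hq
        · intro q hq r hr hqr
          rcases Finset.mem_insert.mp hq with rfl | hq <;>
            rcases Finset.mem_insert.mp hr with rfl | hr
          · exact absurd rfl hqr
          · obtain ⟨hr1, hr2⟩ := ends_mem σ' r hr
            exact ⟨fun h => hppB.1 (h ▸ hr1), fun h => hppB.1 (h ▸ hr2),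
              fun h => hppB.2 (h ▸ hr1), fun h => hppB.2 (h ▸ hr2)⟩
          · obtain ⟨hq1, hq2⟩ := ends_mem σ' q hq
            exact ⟨fun h => hppB.1 (h ▸ hq1), fun h => hppB.2 (h ▸ hq1),
              fun h => hppB.1 (h ▸ hq2), fun h => hppB.2 (h ▸ hq2)⟩
          · exact hm'.2 q hq r hr hqr
      have hinjσ : Set.InjOn (kmap kap) ↑(insert pp σ') := by
        intro x hx y hy hxy
        simp only [Finset.coe_insert, Set.mem_insert_iff, Finset.mem_coe] at hx hy
        rcases hx with rfl | hx <;> rcases hy with rfl | hy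
        · rfl
        · exfalso
          have hmem : kmap kap y ∈ σ'.image (kmap kap) := Finset.mem_image_of_mem _ hy
          rw [himg, ← hxy, hke] at hmem
          exact Finset.notMem_erase e τ hmem
        · exfalso
          have hmem : kmap kap x ∈ σ'.image (kmap kap) := Finset.mem_image_of_mem _ hx
          rw [himg, hxy, hke] at hmem
          exact Finset.notMem_erase e τ hmem
        · exact hinj' hx hy hxy
      refine ⟨insert pp σ', ⟨hmσ, (injOn_iff_not_inDelta kap _).mp hinjσ⟩, ?_⟩
      rw [Finset.image_insert, hke, himg, hτ'def, Finset.insert_erase he]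
end

section
/- For σ, τ ∈ Γ_λ, one has κ(σ) = κ(τ) if and only if there exists g in the Young group S_λ such that g(σ) = τ. -/
set_option synthInstance.maxHeartbeats 1000000
set_option maxHeartbeats 1000000

noncomputable section

namespace MatchPaper

attribute [local instance 10] Classical.propDecidable

end MatchPaper

end

namespace MatchPaperAux
open MatchPaper

attribute [local instance 10] Classical.propDecidable



lemma minmax_eq {α : Type*} [LinearOrder α] {a b c d : α}
    (h1 : min a b = min c d) (h2 : max a b = max c d) :
    (a = c ∧ b = d) ∨ (a = d ∧ b = c) := by
  rcases le_total a b with hab | hab <;> rcases le_total c d with hcd | hcd <;>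
    simp only [min_eq_left, min_eq_right, max_eq_right, max_eq_left, hab, hcd] at h1 h2 <;>
    tauto

lemma kmap_emap {N n : ℕ} (kap : Fin N → Fin n) (g : Equiv.Perm (Fin N))
    (hg : KeepsBlocks kap g) (p : Fin N × Fin N) :
    kmap kap (emap g p) = kmap kap p := by
  have hg' : ∀ x, kap (g x) = kap x := hg
  unfold kmap emap
  rcases le_total (g p.1) (g p.2) with h | h
  · rw [min_eq_left h, max_eq_right h]; simp only [hg']
  · rw [min_eq_right h, max_eq_left h]; simp only [hg']
    rw [min_comm, max_comm]



lemma easy_dir {N n : ℕ} (kap : Fin N → Fin n) (σ τ : Finset (Fin N × Fin N))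
    (g : Equiv.Perm (Fin N)) (hg : KeepsBlocks kap g) (h : σ.image (emap g) = τ) :
    σ.image (kmap kap) = τ.image (kmap kap) := by
  classical
  rw [← h, Finset.image_image]
  exact Finset.image_congr (fun p _ => (kmap_emap kap g hg p).symm)

variable {N n : ℕ} (kap : Fin N → Fin n) (σ τ : Finset (Fin N × Fin N))

/-- the unique edge of `τ` with the same `kmap`-image as `p`, if any -/
noncomputable def mEdge (p : Fin N × Fin N) : Fin N × Fin N :=
  if h : ∃ q ∈ τ, kmap kap q = kmap kap p then h.choose else p

lemma mEdge_spec {p : Fin N × Fin N} (h : ∃ q ∈ τ, kmap kap q = kmap kap p) :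
    mEdge kap τ p ∈ τ ∧ kmap kap (mEdge kap τ p) = kmap kap p := by
  rw [mEdge, dif_pos h]
  exact ⟨h.choose_spec.1, h.choose_spec.2⟩

lemma edge_unique {p p' : Fin N × Fin N} (hm : IsMatching N σ) (hp : p ∈ σ) (hp' : p' ∈ σ)
    {x : Fin N} (hx : x = p.1 ∨ x = p.2) (hx' : x = p'.1 ∨ x = p'.2) : p = p' := by
  by_contra hne
  obtain ⟨h1, h2, h3, h4⟩ := hm.2 p hp p' hp' hne
  rcases hx with hx | hx <;> rcases hx' with hx' | hx' <;> subst hx <;> simp_all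

/-- the vertex map sending endpoints of `σ` to matching endpoints of `τ` -/
noncomputable def fV (x : Fin N) : Fin N :=
  if h : ∃ p ∈ σ, x = p.1 ∨ x = p.2 then
    (if x = h.choose.1 then
      (if kap h.choose.1 = kap (mEdge kap τ h.choose).1 then (mEdge kap τ h.choose).1
        else (mEdge kap τ h.choose).2)
     else
      (if kap h.choose.2 = kap (mEdge kap τ h.choose).2 then (mEdge kap τ h.choose).2
        else (mEdge kap τ h.choose).1))
  else x

lemma fV_spec (hσ : IsGamma kap σ) (hτ : IsGamma kap τ)
    (hk : σ.image (kmap kap) = τ.image (kmap kap)) {p : Fin N × Fin N} (hp : p ∈ σ) :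
    kap (fV kap σ τ p.1) = kap p.1 ∧ kap (fV kap σ τ p.2) = kap p.2 ∧
      ((fV kap σ τ p.1 = (mEdge kap τ p).1 ∧ fV kap σ τ p.2 = (mEdge kap τ p).2) ∨
       (fV kap σ τ p.1 = (mEdge kap τ p).2 ∧ fV kap σ τ p.2 = (mEdge kap τ p).1)) := by
  classical
  have hm := hσ.1
  have hne : p.1 ≠ p.2 := ne_of_lt (hm.1 p hp)
  have hex : ∃ q ∈ τ, kmap kap q = kmap kap p := by
    have h1 : kmap kap p ∈ τ.image (kmap kap) := by
      rw [← hk]; exact Finset.mem_image_of_mem _ hp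
    rw [Finset.mem_image] at h1
    obtain ⟨q, hq1, hq2⟩ := h1
    exact ⟨q, hq1, hq2⟩
  obtain ⟨hqτ, hqk⟩ := mEdge_spec kap τ hex
  have hcase : (kap (mEdge kap τ p).1 = kap p.1 ∧ kap (mEdge kap τ p).2 = kap p.2) ∨
      (kap (mEdge kap τ p).1 = kap p.2 ∧ kap (mEdge kap τ p).2 = kap p.1) := by
    simp only [kmap, Prod.mk.injEq] at hqk
    exact minmax_eq hqk.1 hqk.2
  have e1 : fV kap σ τ p.1 =
      (if kap p.1 = kap (mEdge kap τ p).1 then (mEdge kap τ p).1 else (mEdge kap τ p).2) := by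
    have h1 : ∃ p' ∈ σ, p.1 = p'.1 ∨ p.1 = p'.2 := ⟨p, hp, Or.inl rfl⟩
    rw [fV, dif_pos h1]
    have hcp : h1.choose = p :=
      edge_unique σ hm h1.choose_spec.1 hp h1.choose_spec.2 (Or.inl rfl)
    rw [hcp, if_pos rfl]
  have e2 : fV kap σ τ p.2 =
      (if kap p.2 = kap (mEdge kap τ p).2 then (mEdge kap τ p).2 else (mEdge kap τ p).1) := by
    have h1 : ∃ p' ∈ σ, p.2 = p'.1 ∨ p.2 = p'.2 := ⟨p, hp, Or.inr rfl⟩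
    rw [fV, dif_pos h1]
    have hcp : h1.choose = p :=
      edge_unique σ hm h1.choose_spec.1 hp h1.choose_spec.2 (Or.inr rfl)
    rw [hcp, if_neg (Ne.symm hne)]
  rw [e1, e2]
  rcases hcase with ⟨c1, c2⟩ | ⟨c1, c2⟩
  · rw [if_pos c1.symm, if_pos c2.symm]
    exact ⟨c1, c2, Or.inl ⟨rfl, rfl⟩⟩
  · by_cases hd : kap p.1 = kap p.2
    · have d1 : kap p.1 = kap (mEdge kap τ p).1 := by rw [c1]; exact hd
      have d2 : kap p.2 = kap (mEdge kap τ p).2 := by rw [c2]; exact hd.symm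
      rw [if_pos d1, if_pos d2]
      exact ⟨d1.symm, d2.symm, Or.inl ⟨rfl, rfl⟩⟩
    · have d1 : ¬ kap p.1 = kap (mEdge kap τ p).1 := by rw [c1]; exact hd
      have d2 : ¬ kap p.2 = kap (mEdge kap τ p).2 := by rw [c2]; exact fun h => hd h.symm
      rw [if_neg d1, if_neg d2]
      exact ⟨c2, c1, Or.inr ⟨rfl, rfl⟩⟩

lemma mEdge_ex (hk : σ.image (kmap kap) = τ.image (kmap kap)) {p : Fin N × Fin N}
    (hp : p ∈ σ) : ∃ q ∈ τ, kmap kap q = kmap kap p := by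
  have h1 : kmap kap p ∈ τ.image (kmap kap) := by
    rw [← hk]; exact Finset.mem_image_of_mem _ hp
  rw [Finset.mem_image] at h1
  obtain ⟨q, hq1, hq2⟩ := h1
  exact ⟨q, hq1, hq2⟩

lemma kmap_injOn (hσ : IsGamma kap σ) :
    ∀ p ∈ σ, ∀ q ∈ σ, kmap kap p = kmap kap q → p = q := by
  intro p hp q hq h
  by_contra hne
  apply hσ.2
  refine ⟨p, hp, q, hq, hne, ?_⟩
  simp only [kmap, Prod.mk.injEq] at h
  exact minmax_eq h.1 h.2

lemma mEdge_inj (hσ : IsGamma kap σ) (hk : σ.image (kmap kap) = τ.image (kmap kap)) :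
    ∀ p ∈ σ, ∀ p' ∈ σ, mEdge kap τ p = mEdge kap τ p' → p = p' := by
  intro p hp p' hp' h
  have h1 := (mEdge_spec kap τ (mEdge_ex kap σ τ hk hp)).2
  have h2 := (mEdge_spec kap τ (mEdge_ex kap σ τ hk hp')).2
  exact kmap_injOn kap σ hσ p hp p' hp' (h1.symm.trans (by rw [h]; exact h2))

lemma mEdge_surj (hτ : IsGamma kap τ) (hk : σ.image (kmap kap) = τ.image (kmap kap)) :
    ∀ q ∈ τ, ∃ p ∈ σ, mEdge kap τ p = q := by
  intro q hq
  have h1 : kmap kap q ∈ σ.image (kmap kap) := by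
    rw [hk]; exact Finset.mem_image_of_mem _ hq
  rw [Finset.mem_image] at h1
  obtain ⟨p, hp, hpq⟩ := h1
  refine ⟨p, hp, ?_⟩
  obtain ⟨hm, hmk⟩ := mEdge_spec kap τ (mEdge_ex kap σ τ hk hp)
  exact kmap_injOn kap τ hτ _ hm q hq (by rw [hmk, hpq])

set_option maxHeartbeats 1000000 in
lemma hard_dir (hσ : IsGamma kap σ) (hτ : IsGamma kap τ)
    (hk : σ.image (kmap kap) = τ.image (kmap kap)) :
    ∃ g : Equiv.Perm (Fin N), KeepsBlocks kap g ∧ σ.image (emap g) = τ := by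
  classical
  set f : Fin N → Fin N := fV kap σ τ with hfdef
  set VSσ : Finset (Fin N) := Finset.univ.filter (fun x => ∃ p ∈ σ, x = p.1 ∨ x = p.2)
    with hVSσ
  set VSτ : Finset (Fin N) := Finset.univ.filter (fun x => ∃ q ∈ τ, x = q.1 ∨ x = q.2)
    with hVSτ
  have hmemσ : ∀ x, x ∈ VSσ ↔ ∃ p ∈ σ, x = p.1 ∨ x = p.2 := by
    intro x; rw [hVSσ]; simp
  have hmemτ : ∀ x, x ∈ VSτ ↔ ∃ q ∈ τ, x = q.1 ∨ x = q.2 := by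
    intro x; rw [hVSτ]; simp
  have hedge : ∀ p ∈ σ, (mEdge kap τ p ∈ τ) ∧ kap (f p.1) = kap p.1 ∧ kap (f p.2) = kap p.2 ∧
      ((f p.1 = (mEdge kap τ p).1 ∧ f p.2 = (mEdge kap τ p).2) ∨
       (f p.1 = (mEdge kap τ p).2 ∧ f p.2 = (mEdge kap τ p).1)) := by
    intro p hp
    have h1 := fV_spec kap σ τ hσ hτ hk hp
    exact ⟨(mEdge_spec kap τ (mEdge_ex kap σ τ hk hp)).1, h1.1, h1.2.1, h1.2.2⟩
  have hfmem : ∀ x ∈ VSσ, f x ∈ VSτ ∧ kap (f x) = kap x := by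
    intro x hx
    rw [hmemσ] at hx
    obtain ⟨p, hp, hx⟩ := hx
    obtain ⟨hq, k1, k2, hd⟩ := hedge p hp
    rcases hx with rfl | rfl
    · refine ⟨(hmemτ _).mpr ⟨mEdge kap τ p, hq, ?_⟩, k1⟩
      rcases hd with ⟨a, _⟩ | ⟨a, _⟩
      · exact Or.inl a
      · exact Or.inr a
    · refine ⟨(hmemτ _).mpr ⟨mEdge kap τ p, hq, ?_⟩, k2⟩
      rcases hd with ⟨_, b⟩ | ⟨_, b⟩
      · exact Or.inr b
      · exact Or.inl b
  have hfinj : ∀ x ∈ VSσ, ∀ y ∈ VSσ, f x = f y → x = y := by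
    intro x hx y hy hxy
    rw [hmemσ] at hx hy
    obtain ⟨p, hp, hx⟩ := hx
    obtain ⟨p', hp', hy⟩ := hy
    by_cases hpp : p = p'
    · subst hpp
      obtain ⟨hq, _, _, hd⟩ := hedge p hp
      have hqne : (mEdge kap τ p).1 ≠ (mEdge kap τ p).2 := ne_of_lt (hτ.1.1 _ hq)
      have hfne : f p.1 ≠ f p.2 := by
        rcases hd with ⟨a, b⟩ | ⟨a, b⟩ <;> rw [a, b]
        · exact hqne
        · exact hqne.symm
      rcases hx with rfl | rfl <;> rcases hy with rfl | rfl
      · rfl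
      · exact absurd hxy hfne
      · exact absurd hxy hfne.symm
      · rfl
    · exfalso
      have hqq : mEdge kap τ p ≠ mEdge kap τ p' :=
        fun h => hpp (mEdge_inj kap σ τ hσ hk p hp p' hp' h)
      obtain ⟨hq, _, _, hd⟩ := hedge p hp
      obtain ⟨hq', _, _, hd'⟩ := hedge p' hp'
      obtain ⟨n1, n2, n3, n4⟩ := hτ.1.2 _ hq _ hq' hqq
      have h1 : f x = (mEdge kap τ p).1 ∨ f x = (mEdge kap τ p).2 := by
        rcases hx with rfl | rfl <;> rcases hd with ⟨a, b⟩ | ⟨a, b⟩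
        · exact Or.inl a
        · exact Or.inr a
        · exact Or.inr b
        · exact Or.inl b
      have h2 : f y = (mEdge kap τ p').1 ∨ f y = (mEdge kap τ p').2 := by
        rcases hy with rfl | rfl <;> rcases hd' with ⟨a, b⟩ | ⟨a, b⟩
        · exact Or.inl a
        · exact Or.inr a
        · exact Or.inr b
        · exact Or.inl b
      rw [hxy] at h1
      rcases h1 with e | e <;> rcases h2 with e' | e'
      · exact n1 (e.symm.trans e')
      · exact n2 (e.symm.trans e')
      · exact n3 (e.symm.trans e')
      · exact n4 (e.symm.trans e')
  have hfsurj : ∀ y ∈ VSτ, ∃ x ∈ VSσ, f x = y := by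
    intro y hy
    rw [hmemτ] at hy
    obtain ⟨q, hq, hy⟩ := hy
    obtain ⟨p, hp, hpq⟩ := mEdge_surj kap σ τ hτ hk q hq
    obtain ⟨_, _, _, hd⟩ := hedge p hp
    rw [hpq] at hd
    have h1 : p.1 ∈ VSσ := (hmemσ _).mpr ⟨p, hp, Or.inl rfl⟩
    have h2 : p.2 ∈ VSσ := (hmemσ _).mpr ⟨p, hp, Or.inr rfl⟩
    rcases hy with rfl | rfl <;> rcases hd with ⟨a, b⟩ | ⟨a, b⟩
    · exact ⟨p.1, h1, a⟩
    · exact ⟨p.2, h2, b⟩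
    · exact ⟨p.2, h2, b⟩
    · exact ⟨p.1, h1, a⟩
  -- block counting
  have hScount : ∀ i : Fin n,
      (VSσ.filter (fun x => kap x = i)).card = (VSτ.filter (fun x => kap x = i)).card := by
    intro i
    have himg : (VSσ.filter (fun x => kap x = i)).image f = VSτ.filter (fun x => kap x = i) := by
      apply Finset.Subset.antisymm
      · intro y hy
        rw [Finset.mem_image] at hy
        obtain ⟨x, hx, rfl⟩ := hy
        rw [Finset.mem_filter] at hx ⊢
        exact ⟨(hfmem x hx.1).1, by rw [(hfmem x hx.1).2]; exact hx.2⟩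
      · intro y hy
        rw [Finset.mem_filter] at hy
        obtain ⟨x, hx, rfl⟩ := hfsurj y hy.1
        rw [Finset.mem_image]
        exact ⟨x, Finset.mem_filter.mpr ⟨hx, by rw [← (hfmem x hx).2]; exact hy.2⟩, rfl⟩
    rw [← himg]
    symm
    apply Finset.card_image_of_injOn
    intro x hx y hy hxy
    rw [Finset.mem_coe, Finset.mem_filter] at hx hy
    exact hfinj x hx.1 y hy.1 hxy
  have hABcard : ∀ i : Fin n,
      ((Finset.univ.filter (fun x => kap x = i)) \ VSσ).card =
      ((Finset.univ.filter (fun x => kap x = i)) \ VSτ).card := by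
    intro i
    have e1 : ∀ (W : Finset (Fin N)),
        (Finset.univ.filter (fun x => kap x = i)) ∩ W = W.filter (fun x => kap x = i) := by
      intro W; ext x
      simp [Finset.mem_inter, Finset.mem_filter, and_comm]
    rw [← Finset.sdiff_inter_self_left (Finset.univ.filter (fun x => kap x = i)) VSσ,
      ← Finset.sdiff_inter_self_left (Finset.univ.filter (fun x => kap x = i)) VSτ,
      Finset.card_sdiff_of_subset Finset.inter_subset_left,
      Finset.card_sdiff_of_subset Finset.inter_subset_left, e1, e1, hScount i]
  -- the per-block complement bijections
  let c : ∀ i : Fin n, {x // x ∈ (Finset.univ.filter (fun x => kap x = i)) \ VSσ} ≃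
      {x // x ∈ (Finset.univ.filter (fun x => kap x = i)) \ VSτ} :=
    fun i => Finset.equivOfCardEq (hABcard i)
  have hmemA : ∀ x, x ∉ VSσ → x ∈ (Finset.univ.filter (fun y => kap y = kap x)) \ VSσ := by
    intro x hx
    rw [Finset.mem_sdiff, Finset.mem_filter]
    exact ⟨⟨Finset.mem_univ x, rfl⟩, hx⟩
  have hBfact : ∀ (i : Fin n) (y : Fin N),
      y ∈ (Finset.univ.filter (fun x => kap x = i)) \ VSτ → kap y = i ∧ y ∉ VSτ := by
    intro i y hy
    rw [Finset.mem_sdiff, Finset.mem_filter] at hy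
    exact ⟨hy.1.2, hy.2⟩
  set g0 : Fin N → Fin N := fun x =>
    if hx : x ∈ VSσ then f x
    else if hx2 : x ∈ (Finset.univ.filter (fun y => kap y = kap x)) \ VSσ then
      ↑(c (kap x) ⟨x, hx2⟩)
    else x
    with hg0def
  have hg0pos : ∀ x (hx : x ∈ VSσ), g0 x = f x := by
    intro x hx
    rw [hg0def]
    exact dif_pos hx
  have hg0neg : ∀ x (hx : x ∉ VSσ), g0 x = ↑(c (kap x) ⟨x, hmemA x hx⟩) := by
    intro x hx
    rw [hg0def]
    dsimp only
    rw [dif_neg hx, dif_pos (hmemA x hx)]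
  have hg0B : ∀ x (hx : x ∉ VSσ), kap (g0 x) = kap x ∧ g0 x ∉ VSτ := by
    intro x hx
    rw [hg0neg x hx]
    exact hBfact (kap x) _ (c (kap x) ⟨x, hmemA x hx⟩).2
  have hg0kap : ∀ x, kap (g0 x) = kap x := by
    intro x
    by_cases hx : x ∈ VSσ
    · rw [hg0pos x hx]; exact (hfmem x hx).2
    · exact (hg0B x hx).1
  have hccongr : ∀ (i j : Fin n) (hij : i = j) (x : Fin N)
      (hx : x ∈ (Finset.univ.filter (fun y => kap y = i)) \ VSσ)
      (hx' : x ∈ (Finset.univ.filter (fun y => kap y = j)) \ VSσ),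
      (↑(c i ⟨x, hx⟩) : Fin N) = ↑(c j ⟨x, hx'⟩) := by
    intro i j hij x hx hx'
    subst hij
    rfl
  have hg0inj : Function.Injective g0 := by
    intro x y hxy
    by_cases hx : x ∈ VSσ <;> by_cases hy : y ∈ VSσ
    · rw [hg0pos x hx, hg0pos y hy] at hxy
      exact hfinj x hx y hy hxy
    · exfalso
      rw [hg0pos x hx] at hxy
      exact (hg0B y hy).2 (hxy ▸ (hfmem x hx).1)
    · exfalso
      rw [hg0pos y hy] at hxy
      exact (hg0B x hx).2 (hxy.symm ▸ (hfmem y hy).1)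
    · have hk1 : kap x = kap y := by
        rw [← hg0kap x, ← hg0kap y, hxy]
      have hy' : y ∈ (Finset.univ.filter (fun z => kap z = kap x)) \ VSσ := by
        rw [hk1]; exact hmemA y hy
      rw [hg0neg x hx, hg0neg y hy,
        ← hccongr (kap x) (kap y) hk1 y hy' (hmemA y hy)] at hxy
      have := (c (kap x)).injective (Subtype.ext hxy)
      exact congrArg Subtype.val this
  let g : Equiv.Perm (Fin N) := Equiv.ofBijective g0 (Finite.injective_iff_bijective.mp hg0inj)
  have hgapp : ∀ z, g z = g0 z := fun z => rfl
  have hcomp : ∀ p ∈ σ, emap g p = mEdge kap τ p := by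
    intro p hp
    obtain ⟨hq, _, _, hd⟩ := hedge p hp
    have hqlt : (mEdge kap τ p).1 < (mEdge kap τ p).2 := hτ.1.1 _ hq
    have h1 : p.1 ∈ VSσ := (hmemσ _).mpr ⟨p, hp, Or.inl rfl⟩
    have h2 : p.2 ∈ VSσ := (hmemσ _).mpr ⟨p, hp, Or.inr rfl⟩
    show (min (g p.1) (g p.2), max (g p.1) (g p.2)) = mEdge kap τ p
    rw [hgapp, hgapp, hg0pos p.1 h1, hg0pos p.2 h2]
    rcases hd with ⟨a, b⟩ | ⟨a, b⟩
    · rw [a, b, min_eq_left (le_of_lt hqlt), max_eq_right (le_of_lt hqlt)]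
    · rw [a, b, min_eq_right (le_of_lt hqlt), max_eq_left (le_of_lt hqlt)]
  refine ⟨g, ?_, ?_⟩
  · intro x
    rw [hgapp]
    exact hg0kap x
  · apply Finset.Subset.antisymm
    · intro y hy
      rw [Finset.mem_image] at hy
      obtain ⟨p, hp, rfl⟩ := hy
      rw [hcomp p hp]
      exact (hedge p hp).1
    · intro q hq
      obtain ⟨p, hp, hpq⟩ := mEdge_surj kap σ τ hτ hk q hq
      rw [Finset.mem_image]
      exact ⟨p, hp, by rw [hcomp p hp, hpq]⟩

end MatchPaperAux

open MatchPaper in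
/-- For faces `σ, τ` of `Γ_λ`, `κ(σ) = κ(τ)` iff `τ = g(σ)` for some `g` in
the Young group `S_λ`. -/
theorem kappa_eq_iff_young_orbit
    (N n : ℕ) (lam : Fin n → ℕ) (kap : Fin N → Fin n)
    (hcard : ∀ i : Fin n, (Finset.univ.filter fun x => kap x = i).card = lam i)
    (σ τ : Finset (Fin N × Fin N)) (hσ : IsGamma kap σ) (hτ : IsGamma kap τ) :
    σ.image (kmap kap) = τ.image (kmap kap) ↔
      ∃ g : Equiv.Perm (Fin N), KeepsBlocks kap g ∧ σ.image (emap g) = τ := by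
  constructor
  · intro h
    exact MatchPaperAux.hard_dir kap σ τ hσ hτ h
  · rintro ⟨g, hg, h⟩
    exact MatchPaperAux.easy_dir kap σ τ g hg h
end
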